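/- (Hairpin pairing rule) Let B = B_{n−1} B_{n−2} … B_1 B_0 be a Papadakis–Webster binary string of length n (B_{n−1} being the leading digit). Then for every k with 1 ≤ k ≤ n−1, the digits at the paired positions k−1 and n−k−1 are unequal, B_{k−1} ≠ B_{n−k−1}, except in exactly two situations: (i) B_{k−1} = B_{n−k−1} = 1 and the preceding digits satisfy B_k = B_{n−k} = 1, or (ii) B_{k−1} = B_{n−k−1} = 0 and B_k = B_{n−k} = 0 (where B_n is interpreted as the leading value 1 arising before position n−1). -/

import Mathlib

/-- Digital reversal of a natural number (in base 10). -/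
def rev (D : ℕ) : ℕ := Nat.ofDigits 10 ((Nat.digits 10 D).reverse)

/-- `F` is a Papadakis–Webster integer: `F = E + rev E` where `E = D - rev D`,
for some positive `D` with `D > rev D` such that `E` has the same number of
decimal digits as `D`. -/
def IsPWI (F : ℕ) : Prop :=
  ∃ D : ℕ, 0 < D ∧ rev D < D ∧
    (Nat.digits 10 (D - rev D)).length = (Nat.digits 10 D).length ∧
    F = (D - rev D) + rev (D - rev D)

/-- `Q` is a Papadakis–Webster binary string: the quotient `F / 99` of a
Papadakis–Webster integer `F`. -/
def IsPWBS (Q : ℕ) : Prop := ∃ F : ℕ, IsPWI F ∧ Q = F / 99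

/-- The digit `B_i` of the PWBS `Q` of length `n` (little-endian index `i`, so
`B_{n-1}` is the leading digit), where `B_n` is interpreted as the leading
value 1 arising before position `n-1`. -/
def pwbsDigit (Q n i : ℕ) : ℕ :=
  if i = n then 1 else (Nat.digits 10 Q).getD i 0

/-! Write `D = ∑ xᵢ 10ⁱ` with `n + 1` digits and let `cᵢ` be the borrows of the schoolbook
subtraction `E = D - rev D`, whose digits are `eᵢ = xᵢ - x_{n-i} - cᵢ + 10 c_{i+1}`. In
`eᵢ + e_{n-i}` the digits of `D` cancel, so `E + rev E` telescopes to `99 ∑_{i<n} c_{n-i} 10ⁱ`: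
the PWBS is the borrow string `c₁ c₂ … c_n`. The borrows `c_{k+1}` and `c_{n+1-k}` at paired
positions are decided by the same two digits `x_k`, `x_{n-k}` compared in opposite directions,
so they can agree only when both incoming borrows `c_k`, `c_{n-k}` share their value. -/

open Finset

theorem Nat.ofDigits_ofFn (b : ℕ) (f : ℕ → ℕ) (n : ℕ) :
    Nat.ofDigits b (List.ofFn fun i : Fin n => f i) = ∑ i ∈ range n, f i * b ^ i := by
  induction n generalizing f with
  | zero => simp
  | succ n ih =>
    rw [List.ofFn_succ, Nat.ofDigits_cons, sum_range_succ', Fin.val_zero, pow_zero, mul_one,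
      add_comm]
    simp only [Fin.val_succ]
    rw [ih (fun i => f (i + 1)), mul_sum]
    exact congrArg (· + f 0) (sum_congr rfl fun i _ => by ring)

theorem Nat.sum_mul_pow_lt {b n : ℕ} {f : ℕ → ℕ} (hb : 1 < b) (hf : ∀ i < n, f i < b) :
    ∑ i ∈ range n, f i * b ^ i < b ^ n := by
  rw [← Nat.ofDigits_ofFn]
  simpa using Nat.ofDigits_lt_base_pow_length hb (l := List.ofFn fun i : Fin n => f i)
    (by simpa [List.mem_ofFn] using fun i : Fin n => hf i i.2)

theorem Nat.digits_sum_mul_pow {b n : ℕ} {f : ℕ → ℕ} (hb : 1 < b) (hf : ∀ i < n, f i < b)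
    (htop : 0 < n → f (n - 1) ≠ 0) :
    b.digits (∑ i ∈ range n, f i * b ^ i) = List.ofFn fun i : Fin n => f i := by
  rw [← Nat.ofDigits_ofFn]
  refine Nat.digits_ofDigits b hb _ (by simpa [List.mem_ofFn] using fun i : Fin n => hf i i.2)
    fun hne => ?_
  rw [List.getLast_ofFn]
  exact htop (Nat.pos_of_ne_zero (by simpa using hne))

theorem Nat.ne_zero_of_digits_sum_mul_pow_length {b n : ℕ} {f : ℕ → ℕ} (hb : 1 < b)
    (hf : ∀ i < n, f i < b) (hlen : (b.digits (∑ i ∈ range (n + 1), f i * b ^ i)).length = n + 1) :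
    f n ≠ 0 := by
  intro h
  rw [sum_range_succ, h, zero_mul, add_zero] at hlen
  have := (Nat.digits_length_le_iff hb _).mpr (Nat.sum_mul_pow_lt hb hf)
  omega

theorem List.ofFn_getD {α : Type*} (L : List α) (d : α) :
    (List.ofFn fun i : Fin L.length => L.getD i d) = L := by
  simp

theorem List.reverse_ofFn {α : Type*} {n : ℕ} (f : Fin n → α) :
    (List.ofFn f).reverse = List.ofFn fun i => f i.rev := by
  apply List.ext_getElem (by simp)
  intro i _ _
  simp only [List.getElem_reverse, List.length_ofFn, List.getElem_ofFn, Fin.rev]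
  congr 2
  omega

theorem Nat.eq_sum_getD_digits (b N : ℕ) :
    N = ∑ i ∈ range (b.digits N).length, (b.digits N).getD i 0 * b ^ i := by
  conv_lhs => rw [← Nat.ofDigits_digits b N, ← List.ofFn_getD (b.digits N) 0]
  exact Nat.ofDigits_ofFn b (fun i => (b.digits N).getD i 0) _

theorem rev_sum_mul_pow {n : ℕ} {f : ℕ → ℕ} (hf : ∀ i ≤ n, f i < 10) (htop : f n ≠ 0) :
    rev (∑ i ∈ range (n + 1), f i * 10 ^ i) = ∑ i ∈ range (n + 1), f (n - i) * 10 ^ i := by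
  rw [rev, Nat.digits_sum_mul_pow (by norm_num) (fun i hi => hf i (by omega))
    (fun _ => by simpa using htop), List.reverse_ofFn, ← Nat.ofDigits_ofFn]
  congr 2
  ext i
  simp [Fin.rev]

section Borrow

variable (x y : ℕ → ℕ)

def borrow : ℕ → ℕ
  | 0 => 0
  | i + 1 => if x i < y i + borrow i then 1 else 0

-- The truncated subtractions are exact when `y i < b` (`diffDigit_add_add`).
def diffDigit (b i : ℕ) : ℕ := x i + b * borrow x y (i + 1) - y i - borrow x y i

variable {x y}

theorem borrow_le_one (i : ℕ) : borrow x y i ≤ 1 := by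
  cases i with
  | zero => simp [borrow]
  | succ i => simp only [borrow]; split <;> omega

theorem diffDigit_add_add {b i : ℕ} (hy : y i < b) :
    diffDigit x y b i + y i + borrow x y i = x i + b * borrow x y (i + 1) := by
  have := borrow_le_one (x := x) (y := y) i
  simp only [diffDigit, borrow]
  split <;> omega

theorem diffDigit_lt {b i : ℕ} (hx : x i < b) (hy : y i < b) : diffDigit x y b i < b := by
  have := borrow_le_one (x := x) (y := y) i
  simp only [diffDigit, borrow]
  split <;> omega

theorem sum_diffDigit_add_sum {b m : ℕ} (hy : ∀ i < m, y i < b) :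
    ∑ i ∈ range m, diffDigit x y b i * b ^ i + ∑ i ∈ range m, y i * b ^ i =
      ∑ i ∈ range m, x i * b ^ i + borrow x y m * b ^ m := by
  induction m with
  | zero => simp [borrow]
  | succ m ih =>
    have hm := diffDigit_add_add (x := x) (hy m (by omega))
    simp only [sum_range_succ]
    linear_combination ih (fun i hi => hy i (by omega)) + b ^ m * hm

theorem borrow_eq_zero_of_sum_le {b m : ℕ} (hb : 1 < b) (hx : ∀ i < m, x i < b)
    (hy : ∀ i < m, y i < b) (hle : ∑ i ∈ range m, y i * b ^ i ≤ ∑ i ∈ range m, x i * b ^ i) :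
    borrow x y m = 0 := by
  have hsum := sum_diffDigit_add_sum (x := x) hy
  have hlt := Nat.sum_mul_pow_lt hb fun i hi => diffDigit_lt (hx i hi) (hy i hi)
  rcases Nat.le_one_iff_eq_zero_or_eq_one.mp (borrow_le_one (x := x) (y := y) m) with h | h
  · exact h
  · rw [h] at hsum; omega

theorem sum_sub_sum_eq_sum_diffDigit {b m : ℕ} (hb : 1 < b) (hx : ∀ i < m, x i < b)
    (hy : ∀ i < m, y i < b) (hle : ∑ i ∈ range m, y i * b ^ i ≤ ∑ i ∈ range m, x i * b ^ i) :
    ∑ i ∈ range m, x i * b ^ i - ∑ i ∈ range m, y i * b ^ i =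
      ∑ i ∈ range m, diffDigit x y b i * b ^ i := by
  have := sum_diffDigit_add_sum (x := x) hy
  rw [borrow_eq_zero_of_sum_le hb hx hy hle] at this
  omega

theorem borrow_of_borrow_succ_eq_swap {i j : ℕ} (hi : x i = y j) (hj : x j = y i)
    (h : borrow x y (i + 1) = borrow x y (j + 1)) :
    (borrow x y (i + 1) = 1 ∧ borrow x y i = 1 ∧ borrow x y j = 1) ∨
      (borrow x y (i + 1) = 0 ∧ borrow x y i = 0 ∧ borrow x y j = 0) := by
  have := borrow_le_one (x := x) (y := y) i
  have := borrow_le_one (x := x) (y := y) j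
  simp only [borrow] at h ⊢
  split at h <;> split at h <;> split <;> omega

end Borrow

theorem sum_mul_succ_sub_add_reflect {R : Type*} [CommRing R] (b : R) (c : ℕ → R) {n : ℕ}
    (h0 : c 0 = 0) (hn : c (n + 1) = 0) :
    ∑ i ∈ range (n + 1), (b * c (i + 1) - c i + (b * c (n + 1 - i) - c (n - i))) * b ^ i =
      (b ^ 2 - 1) * ∑ i ∈ range n, c (n - i) * b ^ i := by
  have htel : ∑ i ∈ range (n + 1), (b * c (i + 1) - c i) * b ^ i = 0 := by
    have := sum_range_sub (fun i => c i * b ^ i) (n + 1)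
    simp only [h0, hn, zero_mul, sub_zero] at this
    rw [← this]
    exact sum_congr rfl fun i _ => by ring
  simp only [add_mul]
  rw [sum_add_distrib, htel, zero_add]
  simp only [sub_mul]
  rw [sum_sub_distrib, sum_range_succ', sum_range_succ]
  simp only [Nat.add_sub_add_right, Nat.sub_zero, Nat.sub_self, hn, h0]
  rw [one_mul, mul_sum]
  simp only [mul_zero, zero_mul, add_zero]
  congr 1
  exact sum_congr rfl fun i _ => by ring

section Reversal

variable {x : ℕ → ℕ} {n : ℕ}

theorem diffDigit_add_diffDigit_reflect (hx : ∀ i ≤ n, x i < 10) {i : ℕ} (hi : i ≤ n) :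
    (diffDigit x (fun j => x (n - j)) 10 i : ℤ) + diffDigit x (fun j => x (n - j)) 10 (n - i) =
      10 * (borrow x (fun j => x (n - j)) (i + 1) : ℤ) - borrow x (fun j => x (n - j)) i +
        (10 * (borrow x (fun j => x (n - j)) (n + 1 - i) : ℤ) -
          borrow x (fun j => x (n - j)) (n - i)) := by
  have h₁ := diffDigit_add_add (x := x) (y := fun j => x (n - j)) (hx (n - i) (Nat.sub_le n i))
  have h₂ := diffDigit_add_add (x := x) (y := fun j => x (n - j)) (i := n - i)
    (hx _ (Nat.sub_le n (n - i)))
  rw [Nat.sub_sub_self hi, show n - i + 1 = n + 1 - i by omega] at h₂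
  zify at h₁ h₂
  linear_combination h₁ + h₂

theorem sub_rev_add_rev_eq {D : ℕ} (hx : ∀ i ≤ n, x i < 10) (hxn : x n ≠ 0)
    (hD : D = ∑ i ∈ range (n + 1), x i * 10 ^ i) (hlt : rev D < D)
    (hlen : (Nat.digits 10 (D - rev D)).length = n + 1) :
    D - rev D + rev (D - rev D) =
        99 * ∑ i ∈ range n, borrow x (fun j => x (n - j)) (n - i) * 10 ^ i ∧
      borrow x (fun j => x (n - j)) 1 = 1 := by
  set y : ℕ → ℕ := fun j => x (n - j)
  have hx' : ∀ i < n + 1, x i < 10 := fun i hi => hx i (by omega)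
  have hy : ∀ i < n + 1, y i < 10 := fun i _ => hx _ (Nat.sub_le n i)
  have hrev : rev D = ∑ i ∈ range (n + 1), y i * 10 ^ i := hD ▸ rev_sum_mul_pow hx hxn
  have hle := hlt.le
  rw [hrev, hD] at hle
  have hc : borrow x y (n + 1) = 0 := borrow_eq_zero_of_sum_le (by norm_num) hx' hy hle
  have hE : D - rev D = ∑ i ∈ range (n + 1), diffDigit x y 10 i * 10 ^ i := by
    rw [hrev, hD]
    exact sum_sub_sum_eq_sum_diffDigit (by norm_num) hx' hy hle
  have he : ∀ i < n + 1, diffDigit x y 10 i < 10 := fun i hi => diffDigit_lt (hx' i hi) (hy i hi)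
  have htop : diffDigit x y 10 n ≠ 0 :=
    Nat.ne_zero_of_digits_sum_mul_pow_length (by norm_num) (fun i hi => he i (by omega)) (hE ▸ hlen)
  constructor
  · rw [hE, rev_sum_mul_pow (fun i hi => he i (by omega)) htop]
    zify
    rw [← sum_add_distrib, show (99 : ℤ) = 10 ^ 2 - 1 by norm_num,
      ← sum_mul_succ_sub_add_reflect 10 (fun i => (borrow x y i : ℤ)) (by simp [borrow])
        (by simp [hc])]
    exact sum_congr rfl fun i hi => by
      rw [← add_mul, diffDigit_add_diffDigit_reflect hx (Nat.lt_succ_iff.mp (mem_range.mp hi))]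
  · have hn := diffDigit_add_add (x := x) (y := y) (hy n (by omega))
    rw [hc, mul_zero, add_zero, show y n = x 0 by simp [y]] at hn
    have hlead : x 0 < y 0 + borrow x y 0 := by simp [y, borrow]; omega
    rw [borrow, if_pos hlead]

end Reversal

theorem IsPWBS.exists_digits_eq_borrow {Q : ℕ} (hQ : IsPWBS Q) :
    ∃ (x : ℕ → ℕ) (n : ℕ),
      Nat.digits 10 Q = List.ofFn fun i : Fin n => borrow x (fun j => x (n - j)) (n - i) := by
  obtain ⟨_, ⟨D, hD0, hlt, hlen, rfl⟩, rfl⟩ := hQ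
  obtain ⟨n, hn⟩ : ∃ n, (Nat.digits 10 D).length = n + 1 :=
    Nat.exists_eq_succ_of_ne_zero
      (List.length_pos_iff.mpr (Nat.digits_ne_nil_iff_ne_zero.mpr hD0.ne')).ne'
  set x : ℕ → ℕ := fun i => (Nat.digits 10 D).getD i 0
  have hx : ∀ i ≤ n, x i < 10 := fun i hi => by
    simp only [x, List.getD_eq_getElem _ _ (show i < (Nat.digits 10 D).length by omega)]
    exact Nat.digits_lt_base (by norm_num) (List.getElem_mem _)
  have hxn : x n ≠ 0 := by
    have := Nat.getLast_digit_ne_zero 10 hD0.ne'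
    rwa [List.getLast_eq_getElem, ← List.getD_eq_getElem _ 0, hn, Nat.add_sub_cancel] at this
  have hD : D = ∑ i ∈ range (n + 1), x i * 10 ^ i := hn ▸ Nat.eq_sum_getD_digits 10 D
  obtain ⟨hF, hc⟩ := sub_rev_add_rev_eq hx hxn hD hlt (hn ▸ hlen)
  refine ⟨x, n, ?_⟩
  rw [hF, Nat.mul_div_cancel_left _ (by norm_num)]
  refine Nat.digits_sum_mul_pow (by norm_num) (fun i _ => (borrow_le_one _).trans_lt (by norm_num))
    fun hn => ?_
  rw [Nat.sub_sub_self hn, hc]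
  exact one_ne_zero

/-- hairpin pairing rule: for a Papadakis–Webster binary string
`B_{n-1} … B_1 B_0` of length `n` and every `k` with `1 ≤ k ≤ n-1`, the digits at
the paired positions `k-1` and `n-k-1` are unequal, except in exactly two
situations: both equal 1 with `B_k = B_{n-k} = 1`, or both equal 0 with
`B_k = B_{n-k} = 0`. -/
theorem stmt6 (Q n : ℕ) (hQ : IsPWBS Q)
    (hn : (Nat.digits 10 Q).length = n) :
    ∀ k : ℕ, 1 ≤ k → k ≤ n - 1 →
      pwbsDigit Q n (k - 1) = pwbsDigit Q n (n - k - 1) →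
        (pwbsDigit Q n (k - 1) = 1 ∧ pwbsDigit Q n k = 1 ∧ pwbsDigit Q n (n - k) = 1) ∨
        (pwbsDigit Q n (k - 1) = 0 ∧ pwbsDigit Q n k = 0 ∧ pwbsDigit Q n (n - k) = 0) := by
  intro k hk1 hkn heq
  obtain ⟨x, m, hdig⟩ := hQ.exists_digits_eq_borrow
  obtain rfl : m = n := by simpa [hdig] using hn
  have hB : ∀ i < m, pwbsDigit Q m i = borrow x (fun j => x (m - j)) (m - i) := fun i hi => by
    rw [pwbsDigit, if_neg hi.ne, hdig, List.getD_eq_getElem _ _ (by simpa using hi),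
      List.getElem_ofFn]
  rw [hB _ (by omega), hB _ (by omega), show m - (k - 1) = m - k + 1 by omega,
    show m - (m - k - 1) = k + 1 by omega] at heq
  rw [hB _ (by omega), hB _ (by omega), hB _ (by omega), show m - (k - 1) = m - k + 1 by omega,
    Nat.sub_sub_self (by omega : k ≤ m)]
  have := borrow_of_borrow_succ_eq_swap (x := x) (y := fun j => x (m - j)) (i := k) (j := m - k)
    (by simp only [Nat.sub_sub_self (by omega : k ≤ m)]) rfl heq.symm
  omega
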